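/- arXiv:1405.6535 — 8 statements merged into one kernel-verified Lean document; each statement's English description precedes it below -/
import Mathlib

section
/- Let λ be a measure on ℝ mutually absolutely continuous with Lebesgue measure and finite on bounded intervals, and let g(x,q) = ∫_q^x (x−v) dλ(v) (sign convention as usual). Let P be a probability measure on ℝ (countably additive suffices) with finite mean p = E_P[X], and suppose E_P[g(X,q₀)] < ∞ for some q₀. Then E_P[g(X,q)] is finite for q = p and is uniquely minimized over q at q = p. In particular g is strictly proper. -/
/-! For fixed `q` and `r`, the difference `g(x,q) - g(x,r) = ∫_q^r (x - v) dλ(v)` is affine in `x`,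
so integrating against `P` yields the decomposition `E g(X,q) = E g(X,p) + g(p,q)` as soon as one
expected score is finite. Since `λ` charges every nondegenerate interval, `g(p,q) > 0` for `q ≠ p`. -/

open MeasureTheory intervalIntegral

/-- Scoring rule `g(x,q) = ∫_q^x (x - v) dλ(v)`. -/
noncomputable def score (lam : Measure ℝ) (x q : ℝ) : ℝ :=
  ∫ v in q..x, (x - v) ∂lam

open Set

theorem isLocallyFiniteMeasure_of_Ioo_lt_top {μ : Measure ℝ} (h : ∀ a b : ℝ, μ (Ioo a b) < ⊤) :
    IsLocallyFiniteMeasure μ :=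
  ⟨fun x => ⟨Ioo (x - 1) (x + 1), Ioo_mem_nhds (by linarith) (by linarith), h _ _⟩⟩

theorem intervalIntegral_pos_of_absolutelyContinuous {μ : Measure ℝ} (hμ : volume ≪ μ)
    {f : ℝ → ℝ} {a b : ℝ} (hab : a < b) (hfi : IntervalIntegrable f μ a b)
    (hf : ∀ x ∈ Ioc a b, 0 ≤ f x) (hpos : ∀ x ∈ Ioo a b, 0 < f x) :
    0 < ∫ x in a..b, f x ∂μ := by
  rw [integral_pos_iff_support_of_nonneg_ae' _ hfi]
  · refine ⟨hab, (pos_iff_ne_zero.2 fun h => ?_).trans_le (measure_mono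
      fun x hx => ⟨(hpos x hx).ne', Ioo_subset_Ioc_self hx⟩)⟩
    exact ((Measure.measure_Ioo_pos volume).2 hab).ne' (hμ h)
  · rw [uIoc_of_le hab.le]
    exact ae_restrict_of_forall_mem measurableSet_Ioc hf

section

variable {lam : Measure ℝ}

theorem score_nonneg (x q : ℝ) : 0 ≤ score lam x q := by
  rcases le_total q x with h | h
  · exact integral_nonneg h fun v hv => sub_nonneg.2 hv.2
  · rw [score, integral_symm, ← intervalIntegral.integral_neg]
    exact integral_nonneg h fun v hv => by linarith [hv.1]

variable [IsLocallyFiniteMeasure lam]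

theorem score_pos (hlam : volume ≪ lam) {x q : ℝ} (hxq : q ≠ x) : 0 < score lam x q := by
  rcases hxq.lt_or_gt with h | h
  · exact intervalIntegral_pos_of_absolutelyContinuous hlam h
      ((continuous_const.sub continuous_id).intervalIntegrable _ _)
      (fun v hv => sub_nonneg.2 hv.2) fun v hv => sub_pos.2 hv.2
  · rw [score, integral_symm, ← intervalIntegral.integral_neg]
    exact intervalIntegral_pos_of_absolutelyContinuous hlam h
      ((continuous_const.sub continuous_id).neg.intervalIntegrable _ _)
      (fun v hv => by linarith [hv.1]) fun v hv => by linarith [hv.1]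

theorem intervalIntegral_sub_eq (x a b : ℝ) :
    ∫ v in a..b, (x - v) ∂lam = x * (∫ _ in a..b, (1 : ℝ) ∂lam) - ∫ v in a..b, v ∂lam := by
  rw [intervalIntegral.integral_sub (continuous_const.intervalIntegrable _ _)
    (continuous_id'.intervalIntegrable _ _), ← intervalIntegral.integral_const_mul, mul_one]

theorem score_eq_add (x q r : ℝ) :
    score lam x q = (∫ v in q..r, (x - v) ∂lam) + score lam x r :=
  (integral_add_adjacent_intervals ((continuous_const.sub continuous_id).intervalIntegrable _ _)
    ((continuous_const.sub continuous_id).intervalIntegrable _ _)).symm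

theorem continuous_score [NullSingletonClass lam] (q : ℝ) : Continuous fun x => score lam x q := by
  have hprim {f : ℝ → ℝ} (hf : Continuous f) :=
    continuous_primitive (μ := lam) (fun _ _ => hf.intervalIntegrable _ _) q
  simp only [score, intervalIntegral_sub_eq]
  exact (continuous_id.mul (hprim continuous_const)).sub (hprim continuous_id')

end

section

variable {lam : Measure ℝ} [IsLocallyFiniteMeasure lam] {P : Measure ℝ}

theorem integrable_intervalIntegral_sub [IsFiniteMeasure P] (hX : Integrable (fun x => x) P)
    (a b : ℝ) : Integrable (fun x => ∫ v in a..b, (x - v) ∂lam) P := by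
  simp only [intervalIntegral_sub_eq]
  exact (hX.mul_const _).sub (integrable_const _)

theorem integral_intervalIntegral_sub [IsProbabilityMeasure P] (hX : Integrable (fun x => x) P)
    (a b : ℝ) : ∫ x, (∫ v in a..b, (x - v) ∂lam) ∂P = ∫ v in a..b, ((∫ x, x ∂P) - v) ∂lam := by
  simp only [intervalIntegral_sub_eq]
  rw [integral_sub (hX.mul_const _) (integrable_const _), MeasureTheory.integral_mul_const,
    MeasureTheory.integral_const]
  simp

theorem integrable_score [IsFiniteMeasure P] (hX : Integrable (fun x => x) P) {q₀ : ℝ}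
    (h₀ : Integrable (fun x => score lam x q₀) P) (q : ℝ) :
    Integrable (fun x => score lam x q) P :=
  ((integrable_intervalIntegral_sub hX q q₀).add h₀).congr
    (ae_of_all _ fun x => (score_eq_add x q q₀).symm)

theorem integral_score_eq_add [IsProbabilityMeasure P] (hX : Integrable (fun x => x) P)
    (hint : Integrable (fun x => score lam x (∫ x, x ∂P)) P) (q : ℝ) :
    ∫ x, score lam x q ∂P = ∫ x, score lam x (∫ x, x ∂P) ∂P + score lam (∫ x, x ∂P) q := by
  rw [integral_congr_ae (ae_of_all _ fun x => score_eq_add x q (∫ x, x ∂P)),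
    integral_add (integrable_intervalIntegral_sub hX _ _) hint,
    integral_intervalIntegral_sub hX, add_comm, score]

theorem integrable_score_of_lintegral_lt_top [NullSingletonClass lam] {q : ℝ}
    (h : ∫⁻ x, ENNReal.ofReal (score lam x q) ∂P < ⊤) : Integrable (fun x => score lam x q) P :=
  (lintegral_ofReal_ne_top_iff_integrable (continuous_score q).aestronglyMeasurable
    (ae_of_all _ fun x => score_nonneg x q)).1 h.ne

end

/-- a scoring rule of the form `g(x,q) = ∫_q^x (x-v) dλ(v)` is
strictly proper: if `P` has finite mean `p` and `E_P[g(X,q₀)] < ∞` for some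
`q₀`, then `E_P[g(X,p)]` is finite and the expected score is uniquely
minimized at `q = p`.  (Expected scores are taken as lower integrals of the
nonnegative scores, so that infinite values are handled correctly.) -/
theorem score_strictly_proper (lam : Measure ℝ)
    (h1 : lam ≪ volume) (h2 : volume ≪ lam)
    (hfin : ∀ a b : ℝ, lam (Set.Ioo a b) < ⊤)
    (P : Measure ℝ) [IsProbabilityMeasure P]
    (hX : Integrable (fun x => x) P)
    (p : ℝ) (hp : p = ∫ x, x ∂P)
    (q₀ : ℝ) (hq₀ : ∫⁻ x, ENNReal.ofReal (score lam x q₀) ∂P < ⊤) :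
    (∫⁻ x, ENNReal.ofReal (score lam x p) ∂P < ⊤) ∧
      ∀ q : ℝ, q ≠ p →
        (∫⁻ x, ENNReal.ofReal (score lam x p) ∂P)
          < ∫⁻ x, ENNReal.ofReal (score lam x q) ∂P := by
  have := isLocallyFiniteMeasure_of_Ioo_lt_top hfin
  have : NullSingletonClass lam := ⟨fun x => h1 (measure_singleton x)⟩
  subst hp
  have hint := integrable_score hX (integrable_score_of_lintegral_lt_top hq₀)
  have hlint (q : ℝ) : ∫⁻ x, ENNReal.ofReal (score lam x q) ∂P
      = ENNReal.ofReal (∫ x, score lam x q ∂P) :=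
    (ofReal_integral_eq_lintegral_ofReal (hint q) (ae_of_all _ fun x => score_nonneg x q)).symm
  refine ⟨hlint _ ▸ ENNReal.ofReal_lt_top, fun q hq => ?_⟩
  rw [hlint, hlint, integral_score_eq_add hX (hint _) q]
  have hgap := score_pos h2 hq
  have hmin : 0 ≤ ∫ x, score lam x (∫ x, x ∂P) ∂P := integral_nonneg fun x => score_nonneg x _
  exact (ENNReal.ofReal_lt_ofReal_iff (by linarith)).2 (by linarith)
end

section
/- Let Ω = ℕ, W_i the indicator of state i, and α_i > 0 bounded above by A < ∞. Set the original forecasts p_i = 0 for all i, scored by weighted Brier score α_i(x−q)². Then for any rival forecasts {q_i} with q_i ≠ 0 for some i, there exists ω ∈ ℕ such that Σ_{i=1}^∞ α_i [W_i(ω) − q_i]² ≥ Σ_{i=1}^∞ α_i W_i(ω)². That is, no rival set of forecasts simply dominates the forecasts p_i = 0 in total weighted Brier score. -/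
/-!
In state `ω` the rival total score is `α_ω - 2 α_ω q_ω + d` with `d = ∑ α_i q_i² ∈ (0, ∞]`,
against `α_ω` for the zero forecasts, so it suffices to find `ω` with `2 α_ω q_ω ≤ d`.
This is automatic when `d = ∞`. When `d < ∞`, the terms `α_i q_i²` tend to zero, and since
`(α_i q_i)² ≤ A α_i q_i²` so do the `α_i q_i`; hence `2 α_ω q_ω < d` for all but finitely many `ω`.
-/

open Filter Topology ENNReal

noncomputable def weightedBrierScore {ι : Type*} [DecidableEq ι] (α q : ι → ℝ) (ω : ι) : ℝ≥0∞ :=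
  ∑' i, ENNReal.ofReal (α i * ((if ω = i then 1 else 0) - q i) ^ 2)

section WeightedBrierScore

variable {ι : Type*} [DecidableEq ι] (α q : ι → ℝ) (ω : ι)

lemma weightedBrierScore_zero : weightedBrierScore α 0 ω = ENNReal.ofReal (α ω) := by
  rw [weightedBrierScore, tsum_eq_single ω fun i hi => by simp [Ne.symm hi]]
  simp

lemma ofReal_add_weightedBrierScore :
    ENNReal.ofReal (α ω * q ω ^ 2) + weightedBrierScore α q ω =
      ENNReal.ofReal (α ω * (1 - q ω) ^ 2) + ∑' i, ENNReal.ofReal (α i * q i ^ 2) := by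
  rw [weightedBrierScore, ENNReal.tsum_eq_add_tsum_ite ω,
    ENNReal.tsum_eq_add_tsum_ite (f := fun i => ENNReal.ofReal (α i * q i ^ 2)) ω,
    if_pos rfl, add_left_comm]
  congr 3 with i
  by_cases hi : i = ω
  · simp [hi]
  · simp [hi, Ne.symm hi]

lemma ofReal_le_weightedBrierScore (hα : 0 ≤ α ω)
    (h : ENNReal.ofReal (2 * (α ω * q ω)) ≤ ∑' i, ENNReal.ofReal (α i * q i ^ 2)) :
    ENNReal.ofReal (α ω) ≤ weightedBrierScore α q ω := by
  refine ENNReal.le_of_add_le_add_left (a := ENNReal.ofReal (α ω * q ω ^ 2))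
    ENNReal.ofReal_ne_top ?_
  rw [ofReal_add_weightedBrierScore]
  calc ENNReal.ofReal (α ω * q ω ^ 2) + ENNReal.ofReal (α ω)
      = ENNReal.ofReal (α ω * q ω ^ 2 + α ω) := (ENNReal.ofReal_add (by positivity) hα).symm
    _ = ENNReal.ofReal (α ω * (1 - q ω) ^ 2 + 2 * (α ω * q ω)) := by ring_nf
    _ ≤ ENNReal.ofReal (α ω * (1 - q ω) ^ 2) + ENNReal.ofReal (2 * (α ω * q ω)) :=
        ENNReal.ofReal_add_le
    _ ≤ _ := by gcongr

end WeightedBrierScore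

lemma tendsto_mul_cofinite_zero_of_summable_mul_sq {ι : Type*} {α q : ι → ℝ} {A : ℝ}
    (hα0 : ∀ i, 0 ≤ α i) (hαA : ∀ i, α i ≤ A) (hs : Summable fun i => α i * q i ^ 2) :
    Tendsto (fun i => α i * q i) cofinite (𝓝 0) := by
  have hbound : ∀ i, ‖α i * q i‖ ≤ √(A * (α i * q i ^ 2)) := fun i => by
    rw [Real.norm_eq_abs, ← Real.sqrt_sq_eq_abs]
    refine Real.sqrt_le_sqrt ?_
    calc (α i * q i) ^ 2 = α i * (α i * q i ^ 2) := by ring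
      _ ≤ A * (α i * q i ^ 2) := by have := hα0 i; gcongr; exact hαA i
  refine squeeze_zero_norm hbound ?_
  simpa using (hs.tendsto_cofinite_zero.const_mul A).sqrt

lemma exists_ofReal_two_mul_le_tsum {ι : Type*} [Infinite ι] {α q : ι → ℝ} {A : ℝ}
    (hα0 : ∀ i, 0 ≤ α i) (hαA : ∀ i, α i ≤ A)
    (hpos : 0 < ∑' i, ENNReal.ofReal (α i * q i ^ 2)) :
    ∃ ω, ENNReal.ofReal (2 * (α ω * q ω)) ≤ ∑' i, ENNReal.ofReal (α i * q i ^ 2) := by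
  by_cases htop : ∑' i, ENNReal.ofReal (α i * q i ^ 2) = ∞
  · exact ⟨Classical.arbitrary ι, htop ▸ le_top⟩
  have hs : Summable fun i => α i * q i ^ 2 :=
    (ENNReal.summable_toReal htop).congr fun i =>
      ENNReal.toReal_ofReal (by have := hα0 i; positivity)
  have hlim := ENNReal.tendsto_ofReal
    ((tendsto_mul_cofinite_zero_of_summable_mul_sq hα0 hαA hs).const_mul 2)
  rw [mul_zero, ENNReal.ofReal_zero] at hlim
  exact (hlim.eventually (gt_mem_nhds hpos)).exists.imp fun _ => le_of_lt

/-- with state space `ℕ`, indicators `W_i`, positive weights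
`α_i ≤ A`, original forecasts `p_i = 0` scored by weighted Brier score, no
rival set of forecasts `{q_i}` (with some `q_i ≠ 0`) simply dominates: there
is a state where the rival total weighted Brier score is at least the
original one.  (Total scores are taken in `ℝ≥0∞` so that a possibly
divergent rival total is handled correctly.) -/
theorem no_simple_dominance_weighted_brier (α : ℕ → ℝ) (A : ℝ)
    (hα0 : ∀ i, 0 < α i) (hαA : ∀ i, α i ≤ A)
    (q : ℕ → ℝ) (hq : ∃ i, q i ≠ 0) :
    ∃ ω : ℕ,
      (∑' i : ℕ, ENNReal.ofReal (α i * ((if ω = i then (1:ℝ) else 0))^2))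
        ≤ ∑' i : ℕ, ENNReal.ofReal (α i * ((if ω = i then (1:ℝ) else 0) - q i)^2) := by
  obtain ⟨j, hj⟩ := hq
  have hpos : 0 < ∑' i, ENNReal.ofReal (α i * q i ^ 2) :=
    (ENNReal.ofReal_pos.2 (by have := hα0 j; positivity)).trans_le (ENNReal.le_tsum j)
  obtain ⟨ω, hω⟩ := exists_ofReal_two_mul_le_tsum (fun i => (hα0 i).le) hαA hpos
  have hzero := weightedBrierScore_zero α ω
  simp only [weightedBrierScore, Pi.zero_apply, sub_zero] at hzero
  exact ⟨ω, hzero ▸ ofReal_le_weightedBrierScore α q ω (hα0 ω).le hω⟩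
end

section
/- For i ≥ 1 let α_i = 2^{−i−1} and let g_i be the scoring rule with density f_i(v) = 2 for v ≤ α_i and f_i(v) = 2/α_i for v > α_i, i.e., g_i(x,q) = (1/α_i)(x−q)² when α_i ≤ x,q, and g_i(x,q) = (x−α_i)² + (1/α_i)(q−α_i)² + (2/α_i)(q−α_i)(α_i−x) when x ≤ α_i ≤ q. With p_i = 2^{−i}, q_i = 2^{−i−1}, and X_i(ω) = p_i for ω ∉ A_i, X_i(ω) = q_i − 1 for ω ∈ A_i (where {A_i} partitions Ω), for every ω: Σ_{i=1}^∞ g_i(X_i(ω), p_i) − Σ_{i=1}^∞ g_i(X_i(ω), q_i) = 1.5 + 2^{−i(ω)} > 1.5, where i(ω) is the unique index with ω ∈ A_i. -/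
open Classical

/- Paper index `i ≥ 1` corresponds to Lean index `i : ℕ` via `i ↦ i + 1`;
so `α_i = 2^{-i-1}` becomes `weight i = 2^{-i-2}`, etc. -/

/-- `α_i = 2^{-i-1}` (paper indexing), i.e. `2^{-(i+1)-1}` for `i : ℕ`. -/
noncomputable def weight (i : ℕ) : ℝ := (2:ℝ) ^ (-(i:ℤ) - 2)

/-- The scoring rule `g_i` with density `f_i(v) = 2` for `v ≤ α_i` and
`f_i(v) = 2/α_i` for `v > α_i`. -/
noncomputable def gi (i : ℕ) (x q : ℝ) : ℝ :=
  if x ≤ weight i ∧ q ≤ weight i then (x - q)^2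
  else if x ≤ weight i ∧ weight i ≤ q then
    (x - weight i)^2 + (1 / weight i) * (q - weight i)^2
      + (2 / weight i) * (q - weight i) * (weight i - x)
  else if q ≤ weight i ∧ weight i ≤ x then
    (1 / weight i) * (x - weight i)^2 + (q - weight i)^2
      + 2 * (weight i - q) * (x - weight i)
  else (1 / weight i) * (x - q)^2

lemma weight_pos (i : ℕ) : 0 < weight i := by
  unfold weight; positivity

lemma weight_le (i : ℕ) : weight i ≤ 1/4 := by
  unfold weight
  rw [show (-(i:ℤ) - 2) = (-2) + (-(i:ℤ)) by ring,
    zpow_add₀ (by norm_num : (2:ℝ) ≠ 0)]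
  have h1 : (2:ℝ) ^ (-(i:ℤ)) ≤ 1 := by
    apply zpow_le_one_of_nonpos₀ (by norm_num) (by omega)
  have h2 : (0:ℝ) < (2:ℝ) ^ (-2:ℤ) := by positivity
  nlinarith

lemma weight_eq (i : ℕ) : weight i = (1/4) * (1/2:ℝ)^i := by
  have h : ((1:ℝ)/2)^i = (2:ℝ)^(-(i:ℤ)) := by
    rw [one_div, inv_pow, ← zpow_natCast (2:ℝ) i, ← zpow_neg]
  unfold weight
  rw [h, show (-(i:ℤ) - 2) = (-2) + (-(i:ℤ)) by ring,
    zpow_add₀ (by norm_num : (2:ℝ) ≠ 0)]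
  norm_num

lemma gi_A (i : ℕ) : gi i (2 * weight i) (2 * weight i) = 0 := by
  have h := weight_pos i
  unfold gi
  rw [if_neg (fun hc => by linarith [hc.1] : ¬(2 * weight i ≤ weight i ∧ 2 * weight i ≤ weight i)),
    if_neg (fun hc => by linarith [hc.1] : ¬(2 * weight i ≤ weight i ∧ weight i ≤ 2 * weight i)),
    if_neg (fun hc => by linarith [hc.1] : ¬(2 * weight i ≤ weight i ∧ weight i ≤ 2 * weight i))]
  simp

lemma gi_B (i : ℕ) : gi i (2 * weight i) (weight i) = weight i := by
  have h := weight_pos i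
  unfold gi
  rw [if_neg (fun hc => by linarith [hc.1] : ¬(2 * weight i ≤ weight i ∧ weight i ≤ weight i)),
    if_neg (fun hc => by linarith [hc.1] : ¬(2 * weight i ≤ weight i ∧ weight i ≤ weight i)),
    if_pos ⟨le_refl _, by linarith⟩]
  field_simp
  ring

lemma gi_C (i : ℕ) : gi i (weight i - 1) (2 * weight i) = 3 + weight i := by
  have h := weight_pos i
  have h4 := weight_le i
  unfold gi
  rw [if_neg (fun hc => by linarith [hc.2] : ¬(weight i - 1 ≤ weight i ∧ 2 * weight i ≤ weight i)),
    if_pos ⟨by linarith, by linarith⟩]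
  field_simp
  ring

lemma gi_D (i : ℕ) : gi i (weight i - 1) (weight i) = 1 := by
  have h := weight_pos i
  unfold gi
  rw [if_pos ⟨by linarith, le_refl _⟩]
  ring

lemma weight_summable : Summable weight := by
  have h : weight = fun i => (1/4) * (1/2:ℝ)^i := funext weight_eq
  rw [h]
  exact (summable_geometric_two).mul_left _

lemma weight_tsum : ∑' i, weight i = 1/2 := by
  have h : weight = fun i => (1/4) * (1/2:ℝ)^i := funext weight_eq
  rw [h, tsum_mul_left, tsum_geometric_two]
  norm_num

/-- with `p_i = 2^{-i}`, `q_i = 2^{-i-1}` (paper indexing),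
`X_i = p_i` off `A_i` and `X_i = q_i − 1` on `A_i`, where `{A_i}` partitions
`Ω`, the total score of the forecasts `{p_i}` exceeds the total score of the
rival forecasts `{q_i}` by exactly `1.5 + 2^{-i(ω)} > 1.5` in every state. -/
theorem spread_failure_example {Ω : Type*} (A : ℕ → Set Ω)
    (hdisj : Pairwise (Function.onFun Disjoint A))
    (hcover : ∀ ω, ∃ i, ω ∈ A i)
    (idx : Ω → ℕ) (hidx : ∀ ω, ω ∈ A (idx ω))
    (p q : ℕ → ℝ)
    (hp : ∀ i, p i = (2:ℝ) ^ (-(i:ℤ) - 1))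
    (hq : ∀ i, q i = (2:ℝ) ^ (-(i:ℤ) - 2))
    (X : ℕ → Ω → ℝ)
    (hX : ∀ i ω, X i ω = if ω ∈ A i then q i - 1 else p i) :
    ∀ ω : Ω,
      (∑' i : ℕ, gi i (X i ω) (p i)) - (∑' i : ℕ, gi i (X i ω) (q i))
          = 1.5 + (2:ℝ) ^ (-(idx ω : ℤ) - 1) ∧
        1.5 < (∑' i : ℕ, gi i (X i ω) (p i)) - (∑' i : ℕ, gi i (X i ω) (q i)) := by
  intro ω
  set j := idx ω with hj
  have hmem : ∀ i, ω ∈ A i ↔ i = j := by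
    intro i
    constructor
    · intro h
      by_contra hne
      exact Set.disjoint_left.mp (hdisj hne) h (hidx ω)
    · rintro rfl; exact hidx ω
  have hqw : ∀ i, q i = weight i := by intro i; rw [hq i]; rfl
  have hpw : ∀ i, p i = 2 * weight i := by
    intro i
    rw [hp]
    unfold weight
    rw [show (-(i:ℤ) - 1) = 1 + (-(i:ℤ) - 2) by ring,
      zpow_add₀ (by norm_num : (2:ℝ) ≠ 0)]
    norm_num
  have hF : ∀ i, gi i (X i ω) (p i) = if i = j then 3 + weight j else 0 := by
    intro i
    by_cases h : i = j
    · subst h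
      rw [hX, if_pos (hidx ω), hqw, hpw, if_pos rfl]
      exact gi_C _
    · rw [hX, if_neg (fun hm => h ((hmem i).mp hm)), hpw, if_neg h]
      exact gi_A _
  have hG : ∀ i, gi i (X i ω) (q i)
      = weight i + (if i = j then 1 - weight j else 0) := by
    intro i
    by_cases h : i = j
    · subst h
      rw [hX, if_pos (hidx ω), hqw, if_pos rfl, gi_D]
      ring
    · rw [hX, if_neg (fun hm => h ((hmem i).mp hm)), hpw, hqw, if_neg h, gi_B]
      ring
  have hsum1 : ∑' i, gi i (X i ω) (p i) = 3 + weight j := by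
    rw [tsum_congr hF, tsum_ite_eq]
  have hsum2 : ∑' i, gi i (X i ω) (q i) = 3/2 - weight j := by
    rw [tsum_congr hG,
      Summable.tsum_add weight_summable ((hasSum_ite_eq j (1 - weight j)).summable),
      tsum_ite_eq, weight_tsum]
    ring
  have hkey : (2:ℝ) ^ (-(j:ℤ) - 1) = 2 * weight j := by
    unfold weight
    rw [show (-(j:ℤ) - 1) = 1 + (-(j:ℤ) - 2) by ring,
      zpow_add₀ (by norm_num : (2:ℝ) ≠ 0)]
    norm_num
  have hwpos := weight_pos j
  constructor
  · rw [hsum1, hsum2, hkey]; norm_num; ring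
  · rw [hsum1, hsum2]; norm_num; linarith
end

section
/- Let Ω = {ω_{ij} : i ∈ {1,2}, j ∈ ℕ}, F = {ω_{2j} : j ∈ ℕ}, H_j = {ω_{1j}, ω_{2j}}, and define p_F = 1/2 and p_j = 1 for all j. Then for every ω ∈ Ω, −(F(ω) − p_F) + Σ_{j=1}^∞ H_j(ω)[F(ω) − p_j] = −1/2. Hence the sum of these individually fair options is uniformly strictly dominated by abstaining (loss 0). -/
/- The Dubins example: `Ω = {ω_{ij} : i ∈ {1,2}, j ∈ ℕ}` is modelled as
`Bool × ℕ`, with `ω_{2j} = (true, j)` and `ω_{1j} = (false, j)`.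
`F = {ω_{2j} : j}` and `H_j = {ω_{1j}, ω_{2j}}`; indicator functions: -/

/-- Indicator of `F`. -/
def indF (ω : Bool × ℕ) : ℝ := if ω.1 then 1 else 0

/-- Indicator of `H_j`. -/
def indH (j : ℕ) (ω : Bool × ℕ) : ℝ := if ω.2 = j then 1 else 0

/-- with forecasts `p_F = 1/2` and `p_j = P(F|H_j) = 1`, the sum
of the individually fair options `−(F − p_F) + Σ_j H_j (F − p_j)` equals
`−1/2` in every state, hence is uniformly strictly dominated by abstaining. -/
theorem dubins_fair_options_dominated :
    ∀ ω : Bool × ℕ,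
      -(indF ω - 1/2) + (∑' j : ℕ, indH j ω * (indF ω - 1)) = -(1/2) := by
  intro ω
  have h : (∑' j : ℕ, indH j ω * (indF ω - 1)) = indF ω - 1 := by
    rw [tsum_eq_single ω.2]
    · simp [indH]
    · intro b hb
      simp [indH, Ne.symm hb]
  rw [h]
  ring
end

section
/- With Ω, F, H_j as in the Dubins example and forecasts p_F = 1/2, p_j = 1 for all j, scored by Brier score: for every ω ∈ Ω, (F(ω) − 1/2)² + Σ_{j=1}^∞ H_j(ω)[F(ω) − p_j]² equals 1.25 if ω ∉ F and 0.25 if ω ∈ F, whereas with rival forecasts q_F = 3/4 and q_j = 3/4 the total score (F(ω) − 3/4)² + Σ_{j=1}^∞ H_j(ω)[F(ω) − 3/4]² equals 1.125 if ω ∉ F and 0.125 if ω ∈ F. Hence the rival total score is exactly 0.125 smaller in every state, so the original forecasts are uniformly strictly dominated. -/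
lemma tsum_indH (ω : Bool × ℕ) (c : ℝ) : (∑' j : ℕ, indH j ω * c) = c := by
  rw [tsum_eq_single ω.2]
  · simp [indH]
  · intro j hj
    simp [indH, Ne.symm hj]

/-- with forecasts `p_F = 1/2`, `p_j = 1` scored by Brier score,
the total score is `1.25` off `F` and `0.25` on `F`, while the rival forecasts
`q_F = q_j = 3/4` total `1.125` off `F` and `0.125` on `F`; the rival total is
exactly `0.125` smaller in every state, a uniform strict domination. -/
theorem dubins_brier_dominated :
    ∀ ω : Bool × ℕ,
      ((indF ω - 1/2)^2 + (∑' j : ℕ, indH j ω * (indF ω - 1)^2)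
          = if ω.1 then 0.25 else 1.25) ∧
      ((indF ω - 3/4)^2 + (∑' j : ℕ, indH j ω * (indF ω - 3/4)^2)
          = if ω.1 then 0.125 else 1.125) ∧
      ((indF ω - 1/2)^2 + (∑' j : ℕ, indH j ω * (indF ω - 1)^2))
          - ((indF ω - 3/4)^2 + (∑' j : ℕ, indH j ω * (indF ω - 3/4)^2))
          = 0.125 := by
  intro ω
  simp only [tsum_indH]
  obtain ⟨b, n⟩ := ω
  cases b <;> simp [indF] <;> norm_num
end

section
/- Let P be a finitely additive expectation on a linear space of random variables, π = {H_j}_{j≥1} a countable partition, and P(·|H_j) finitely additive expectations with P(X|H_j) = P(H_j X|H_j). Suppose P satisfies the law of total previsions: P(X) = P[P(X|π)], where P(X|π)(ω) = P(X|H_j) for ω ∈ H_j. Let X have finite P(X) = p_X and finite p_j = P(X|H_j) for all j, and let {α_j}_{j≥0} be reals. Then P[α₀(X − p_X) + Σ_{j=1}^∞ α_j H_j (X − p_j)] = 0; consequently the loss α₀(X(ω) − p_X) + Σ_j α_j H_j(ω)(X(ω) − p_j) cannot satisfy ≥ ε for all ω for any ε > 0 (since a random variable that is everywhere ≥ ε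 has prevision ≥ ε). -/
open Classical

/-- Let `P` be a finitely additive expectation (a normalized,
monotone, linear functional) with conditional finitely additive expectations
`Pc j = P(·|H_j)` for a countable partition `π = {H_j}` (coded by the index
map `idx : Ω → ℕ`, so `H_j = {ω | idx ω = j}`), each concentrated on its own
element (`P(X|H_j) = P(H_j X|H_j)`), and satisfying the law of total
previsions `P(X) = P[P(X|π)]`.  Then for any `X` with `p_X = P(X)` and
`p_j = P(X|H_j)`, and any reals `α₀, α₁, …`, the combined loss
`α₀(X − p_X) + Σ_j α_j H_j (X − p_j)` has prevision `0`, and in particular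
it is not uniformly bounded below by any `ε > 0`. -/
theorem law_of_total_previsions_no_sure_loss {Ω : Type*}
    (P : (Ω → ℝ) → ℝ) (Pc : ℕ → (Ω → ℝ) → ℝ) (idx : Ω → ℕ)
    -- P is a finitely additive expectation:
    (hPadd : ∀ X Y : Ω → ℝ, P (X + Y) = P X + P Y)
    (hPsmul : ∀ (c : ℝ) (X : Ω → ℝ), P (fun ω => c * X ω) = c * P X)
    (hPmono : ∀ X Y : Ω → ℝ, X ≤ Y → P X ≤ P Y)
    (hPone : P (fun _ => 1) = 1)
    -- each Pc j is a finitely additive expectation: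
    (hCadd : ∀ j (X Y : Ω → ℝ), Pc j (X + Y) = Pc j X + Pc j Y)
    (hCsmul : ∀ j (c : ℝ) (X : Ω → ℝ), Pc j (fun ω => c * X ω) = c * Pc j X)
    (hCmono : ∀ j (X Y : Ω → ℝ), X ≤ Y → Pc j X ≤ Pc j Y)
    (hCone : ∀ j, Pc j (fun _ => 1) = 1)
    -- Pc j is concentrated on H_j : P(X|H_j) = P(H_j X|H_j):
    (hconc : ∀ j (X : Ω → ℝ),
      Pc j X = Pc j (fun ω => (if idx ω = j then (1:ℝ) else 0) * X ω))
    -- the law of total previsions P(X) = P[P(X|π)]: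
    (hltp : ∀ X : Ω → ℝ, P X = P (fun ω => Pc (idx ω) X))
    (X : Ω → ℝ) (pX : ℝ) (hpX : pX = P X) (p : ℕ → ℝ) (hps : ∀ j, p j = Pc j X)
    (α₀ : ℝ) (α : ℕ → ℝ) :
    P (fun ω => α₀ * (X ω - pX)
        + ∑' j : ℕ, α j * (if idx ω = j then (1:ℝ) else 0) * (X ω - p j)) = 0 ∧
      ∀ ε : ℝ, 0 < ε →
        ¬ ∀ ω : Ω, ε ≤ α₀ * (X ω - pX)
          + ∑' j : ℕ, α j * (if idx ω = j then (1:ℝ) else 0) * (X ω - p j) := by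
  have hPconst : ∀ c : ℝ, P (fun _ => c) = c := by
    intro c
    have := hPsmul c (fun _ => 1)
    simpa [hPone] using this
  have hCconst : ∀ j (c : ℝ), Pc j (fun _ => c) = c := by
    intro j c
    have := hCsmul j c (fun _ => 1)
    simpa [hCone j] using this
  -- the tsum collapses to the single term j = idx ω
  have htsum : ∀ ω, (∑' j : ℕ, α j * (if idx ω = j then (1:ℝ) else 0) * (X ω - p j))
      = α (idx ω) * (X ω - p (idx ω)) := by
    intro ω
    rw [tsum_eq_single (idx ω)]
    · simp
    · intro b hb
      simp [(Ne.symm hb : idx ω ≠ b)]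
  -- the indicator has conditional prevision 1
  have hCind : ∀ j, Pc j (fun ω => (if idx ω = j then (1:ℝ) else 0)) = 1 := by
    intro j
    have h := hconc j (fun _ => 1)
    simp only [mul_one] at h
    rw [← h, hCone j]
  -- conditional prevision of the j-th loss piece is 0
  have hCpiece : ∀ j, Pc j (fun ω => (if idx ω = j then (1:ℝ) else 0) * (X ω - p j)) = 0 := by
    intro j
    have e1 : (fun ω => (if idx ω = j then (1:ℝ) else 0) * (X ω - p j))
        = (fun ω => (if idx ω = j then (1:ℝ) else 0) * X ω)
          + (fun ω => (-(p j)) * (if idx ω = j then (1:ℝ) else 0)) := by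
      funext ω
      simp only [Pi.add_apply]
      ring
    rw [e1, hCadd, ← hconc j X, hCsmul, hCind, ← hps j]
    ring
  -- the conditional prevision of the sum term is 0 for every j
  have hCg : ∀ j, Pc j (fun ω => α (idx ω) * (X ω - p (idx ω))) = 0 := by
    intro j
    rw [hconc j]
    have heq : (fun ω => (if idx ω = j then (1:ℝ) else 0) * (α (idx ω) * (X ω - p (idx ω))))
        = fun ω => α j * ((if idx ω = j then (1:ℝ) else 0) * (X ω - p j)) := by
      funext ω
      by_cases h : idx ω = j <;> simp [h]
    rw [heq, hCsmul, hCpiece j]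
    ring
  -- prevision of the sum term via law of total previsions
  have hPg : P (fun ω => α (idx ω) * (X ω - p (idx ω))) = 0 := by
    rw [hltp]
    have : (fun ω => Pc (idx ω) (fun ω' => α (idx ω') * (X ω' - p (idx ω')))) = fun _ => (0:ℝ) := by
      funext ω; exact hCg (idx ω)
    rw [this, hPconst]
  -- prevision of the first term
  have hP1 : P (fun ω => α₀ * (X ω - pX)) = 0 := by
    have e1 : (fun ω => X ω - pX) = X + (fun _ => -pX) := by
      funext ω; simp only [Pi.add_apply]; ring
    rw [hPsmul, e1, hPadd, hPconst, hpX]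
    ring
  have hmain : P (fun ω => α₀ * (X ω - pX)
      + ∑' j : ℕ, α j * (if idx ω = j then (1:ℝ) else 0) * (X ω - p j)) = 0 := by
    have e : (fun ω => α₀ * (X ω - pX)
        + ∑' j : ℕ, α j * (if idx ω = j then (1:ℝ) else 0) * (X ω - p j))
        = (fun ω => α₀ * (X ω - pX)) + (fun ω => α (idx ω) * (X ω - p (idx ω))) := by
      funext ω
      simp only [Pi.add_apply, htsum ω]
    rw [e, hPadd, hP1, hPg]
    ring
  refine ⟨hmain, ?_⟩
  intro ε hε hall
  have hle : (fun _ => ε) ≤ (fun ω => α₀ * (X ω - pX)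
      + ∑' j : ℕ, α j * (if idx ω = j then (1:ℝ) else 0) * (X ω - p j)) := fun ω => hall ω
  have := hPmono _ _ hle
  rw [hPconst, hmain] at this
  linarith
end

section
/- Under the hypotheses of the law-of-total-previsions setting (finitely additive prevision P, countable partition π = {H_j}, conditional finitely additive expectations P(·|H_j) with P(X|H_j) = P(H_jX|H_j), and P(X) = P[P(X|π)]), let g₀, g₁, … be strictly proper scoring rules, p_X = P(X), p_j = P(X|H_j). Then for every rival set of forecasts q_X, {q_j}: P[g₀(X,q_X) + Σ_j H_j g_j(X,q_j)] ≥ P[g₀(X,p_X) + Σ_j H_j g_j(X,p_j)]. Hence the original total score cannot be uniformly strictly dominated by any rival forecasts. -/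
open Classical

/-- in the law-of-total-previsions setting (finitely additive
prevision `P`, countable partition coded by `idx : Ω → ℕ`, conditional
finitely additive expectations `Pc j` concentrated on `H_j`, and
`P(X) = P[P(X|π)]`), with strictly proper scoring rules `g₀, g₁, …` (propriety
stated via: the conditional/unconditional expected score is minimized at the
corresponding prevision), forecasts `p_X = P(X)`, `p_j = P(X|H_j)`: for every
rival set of forecasts `q_X, {q_j}` the prevision of the rival total score is
at least that of the original total score, and hence no rival forecasts
uniformly strictly dominate the original total score. -/
theorem ltp_scores_not_dominated {Ω : Type*}
    (P : (Ω → ℝ) → ℝ) (Pc : ℕ → (Ω → ℝ) → ℝ) (idx : Ω → ℕ)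
    (hPadd : ∀ X Y : Ω → ℝ, P (X + Y) = P X + P Y)
    (hPsmul : ∀ (c : ℝ) (X : Ω → ℝ), P (fun ω => c * X ω) = c * P X)
    (hPmono : ∀ X Y : Ω → ℝ, X ≤ Y → P X ≤ P Y)
    (hPone : P (fun _ => 1) = 1)
    (hCadd : ∀ j (X Y : Ω → ℝ), Pc j (X + Y) = Pc j X + Pc j Y)
    (hCsmul : ∀ j (c : ℝ) (X : Ω → ℝ), Pc j (fun ω => c * X ω) = c * Pc j X)
    (hCmono : ∀ j (X Y : Ω → ℝ), X ≤ Y → Pc j X ≤ Pc j Y)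
    (hCone : ∀ j, Pc j (fun _ => 1) = 1)
    (hconc : ∀ j (X : Ω → ℝ),
      Pc j X = Pc j (fun ω => (if idx ω = j then (1:ℝ) else 0) * X ω))
    (hltp : ∀ X : Ω → ℝ, P X = P (fun ω => Pc (idx ω) X))
    (g₀ : ℝ → ℝ → ℝ) (g : ℕ → ℝ → ℝ → ℝ)
    -- strict propriety of the scoring rules for these previsions:
    (hg₀proper : ∀ (X : Ω → ℝ) (q : ℝ),
      P (fun ω => g₀ (X ω) (P X)) ≤ P (fun ω => g₀ (X ω) q))
    (hgproper : ∀ j (X : Ω → ℝ) (q : ℝ),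
      Pc j (fun ω => g j (X ω) (Pc j X)) ≤ Pc j (fun ω => g j (X ω) q))
    (X : Ω → ℝ) (pX : ℝ) (hpX : pX = P X) (p : ℕ → ℝ) (hps : ∀ j, p j = Pc j X) :
    ∀ (qX : ℝ) (q : ℕ → ℝ),
      (P (fun ω => g₀ (X ω) pX
            + ∑' j : ℕ, (if idx ω = j then (1:ℝ) else 0) * g j (X ω) (p j))
        ≤ P (fun ω => g₀ (X ω) qX
            + ∑' j : ℕ, (if idx ω = j then (1:ℝ) else 0) * g j (X ω) (q j))) ∧
      ∀ ε : ℝ, 0 < ε →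
        ¬ ∀ ω : Ω,
          g₀ (X ω) qX
              + (∑' j : ℕ, (if idx ω = j then (1:ℝ) else 0) * g j (X ω) (q j)) + ε
            ≤ g₀ (X ω) pX
              + ∑' j : ℕ, (if idx ω = j then (1:ℝ) else 0) * g j (X ω) (p j) := by
  intro qX q
  have key : ∀ (ω : Ω) (r : ℕ → ℝ),
      (∑' j : ℕ, (if idx ω = j then (1:ℝ) else 0) * g j (X ω) (r j))
        = g (idx ω) (X ω) (r (idx ω)) := by
    intro ω r
    rw [tsum_eq_single (idx ω)]
    · simp
    · intro j hj
      rw [if_neg (fun h => hj h.symm), zero_mul]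
  have hconst : ∀ c : ℝ, P (fun _ => c) = c := by
    intro c
    have := hPsmul c (fun _ => 1)
    simpa [hPone] using this
  have e : ∀ (r : ℕ → ℝ) (j : ℕ),
      Pc j (fun ω' => g (idx ω') (X ω') (r (idx ω')))
        = Pc j (fun ω' => g j (X ω') (r j)) := by
    intro r j
    rw [hconc j (fun ω' => g (idx ω') (X ω') (r (idx ω'))),
      hconc j (fun ω' => g j (X ω') (r j))]
    congr 1
    funext ω'
    by_cases h : idx ω' = j <;> simp [h]
  have hB : P (fun ω => g (idx ω) (X ω) (p (idx ω)))
      ≤ P (fun ω => g (idx ω) (X ω) (q (idx ω))) := by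
    rw [hltp (fun ω => g (idx ω) (X ω) (p (idx ω))),
      hltp (fun ω => g (idx ω) (X ω) (q (idx ω)))]
    apply hPmono
    intro ω
    show Pc (idx ω) (fun ω' => g (idx ω') (X ω') (p (idx ω')))
        ≤ Pc (idx ω) (fun ω' => g (idx ω') (X ω') (q (idx ω')))
    rw [e p (idx ω), e q (idx ω), hps (idx ω)]
    exact hgproper (idx ω) X (q (idx ω))
  have hA : P (fun ω => g₀ (X ω) pX) ≤ P (fun ω => g₀ (X ω) qX) := by
    rw [hpX]; exact hg₀proper X qX
  have hmain : P (fun ω => g₀ (X ω) pX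
        + ∑' j : ℕ, (if idx ω = j then (1:ℝ) else 0) * g j (X ω) (p j))
      ≤ P (fun ω => g₀ (X ω) qX
        + ∑' j : ℕ, (if idx ω = j then (1:ℝ) else 0) * g j (X ω) (q j)) := by
    have ep : (fun ω => g₀ (X ω) pX
        + ∑' j : ℕ, (if idx ω = j then (1:ℝ) else 0) * g j (X ω) (p j))
        = (fun ω => g₀ (X ω) pX) + (fun ω => g (idx ω) (X ω) (p (idx ω))) := by
      funext ω; simp only [Pi.add_apply]; rw [key ω p]
    have eq' : (fun ω => g₀ (X ω) qX
        + ∑' j : ℕ, (if idx ω = j then (1:ℝ) else 0) * g j (X ω) (q j))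
        = (fun ω => g₀ (X ω) qX) + (fun ω => g (idx ω) (X ω) (q (idx ω))) := by
      funext ω; simp only [Pi.add_apply]; rw [key ω q]
    rw [ep, eq', hPadd, hPadd]
    exact add_le_add hA hB
  refine ⟨hmain, ?_⟩
  intro ε hε hdom
  have hle : P (fun ω => (g₀ (X ω) qX
        + ∑' j : ℕ, (if idx ω = j then (1:ℝ) else 0) * g j (X ω) (q j)) + ε)
      ≤ P (fun ω => g₀ (X ω) pX
        + ∑' j : ℕ, (if idx ω = j then (1:ℝ) else 0) * g j (X ω) (p j)) :=
    hPmono _ _ (fun ω => hdom ω)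
  have heps : P (fun ω => (g₀ (X ω) qX
        + ∑' j : ℕ, (if idx ω = j then (1:ℝ) else 0) * g j (X ω) (q j)) + ε)
      = P (fun ω => g₀ (X ω) qX
        + ∑' j : ℕ, (if idx ω = j then (1:ℝ) else 0) * g j (X ω) (q j)) + ε := by
    have := hPadd (fun ω => g₀ (X ω) qX
        + ∑' j : ℕ, (if idx ω = j then (1:ℝ) else 0) * g j (X ω) (q j)) (fun _ => ε)
    rw [hconst] at this
    exact this
  rw [heps] at hle
  linarith
end

section
/- Let P be a finitely additive prevision with countable partition π = {H_j} nonconglomerable for X: there is ε > 0 with inf_j P(X|H_j) − P(X) = ε > 0. Write p_X = P(X), p_j = P(X|H_j), and for ω let i(ω) be the unique j with ω ∈ H_j. Then for every ω: X(ω) − p_X + Σ_{j=1}^∞ (−H_j(ω))[X(ω) − p_j] = p_{i(ω)} − p_X ≥ ε > 0. Hence this countable sum of individually fair options is uniformly strictly dominated by abstaining. -/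
open Classical

/-- if the conditional previsions `p_j = P(X|H_j)` are
nonconglomerable for `X`, with `inf_j P(X|H_j) − P(X) = ε > 0` (so
`p_X + ε ≤ p_j` for all `j`), then in every state the countable sum of the
individually fair options `X − p_X` and `−H_j(X − p_j)` equals
`p_{i(ω)} − p_X ≥ ε > 0`; hence it is uniformly strictly dominated by
abstaining. -/
theorem nonconglomerable_fair_sum_dominated {Ω : Type*}
    (idx : Ω → ℕ) (X : Ω → ℝ) (pX : ℝ) (p : ℕ → ℝ) (ε : ℝ)
    (hε : 0 < ε) (hinf : ∀ j, pX + ε ≤ p j) :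
    ∀ ω : Ω,
      (X ω - pX
          + ∑' j : ℕ, (-(if idx ω = j then (1:ℝ) else 0)) * (X ω - p j))
            = p (idx ω) - pX ∧
        ε ≤ p (idx ω) - pX := by
  intro ω
  constructor
  · have h : (∑' j : ℕ, (-(if idx ω = j then (1:ℝ) else 0)) * (X ω - p j))
        = -(X ω - p (idx ω)) := by
      rw [tsum_eq_single (idx ω)]
      · simp
      · intro b hb
        simp [Ne.symm hb]
    rw [h]; ring
  · linarith [hinf (idx ω)]
end
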